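/- arXiv:2507.03883 — 3 statements merged into one kernel-verified Lean document; each statement's English description precedes it below -/
import Mathlib

section
/- Let γ(x,t) = x − t^α with 0 < α < 1/2, and let f_R be defined by f̂_R(η) = (1/R) g(η/R) with g ∈ C_0^∞ nonnegative, supported in [−1/2,1/2], ∫g = 1. For x ∈ (cR^{−2α}/2, cR^{−2α}) with c sufficiently small and R large, setting t_x = x^{1/α}, the phase Φ_R(ξ; x, t_x) = (x − t_x^α) R ξ + t_x R² ξ² satisfies |Φ_R(ξ; x, t_x)| ≤ 1/100 for all |ξ| ≤ 1/2, and consequently |U_γ f_R(x, t_x)| ≥ 1/(4π). -/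
open MeasureTheory Real Set

/-- `U_γ` for the curve `γ(x,t) = x − t^α`, acting on the Fourier side:
`(1/(2π)) ∫ e^{i((x−t^α)η + tη²)} f̂(η) dη`. -/
noncomputable def Uminus (α : ℝ) (fhat : ℝ → ℂ) (x t : ℝ) : ℂ :=
  (1 / (2 * π)) * ∫ η : ℝ, Complex.exp (Complex.I * (((x - t ^ α) * η + t * η ^ 2 : ℝ) : ℂ)) * fhat η

/-- Auxiliary: integrability of `exp(i φ ξ) * g ξ` for continuous `φ` and continuous
compactly supported `g`. -/
lemma aux_integrable_exp_mul
    (g : ℝ → ℝ) (hg : Continuous g) (hgsupp : Function.support g ⊆ Icc (-(1/2)) (1/2))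
    (φ : ℝ → ℝ) (hφ : Continuous φ) :
    Integrable (fun ξ : ℝ => Complex.exp (Complex.I * (φ ξ : ℂ)) * (g ξ : ℂ)) := by
  have hcont : Continuous fun ξ : ℝ => Complex.exp (Complex.I * (φ ξ : ℂ)) * (g ξ : ℂ) := by
    fun_prop
  have hcs : HasCompactSupport fun ξ : ℝ => Complex.exp (Complex.I * (φ ξ : ℂ)) * (g ξ : ℂ) := by
    apply HasCompactSupport.intro (isCompact_Icc (a := -(1/2 : ℝ)) (b := 1/2))
    intro ξ hξ
    have hgz : g ξ = 0 := by
      by_contra h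
      exact hξ (hgsupp h)
    simp [hgz]
  exact hcont.integrable_of_hasCompactSupport hcs

/-- Auxiliary: integrability of `cos (φ ξ) * g ξ`. -/
lemma aux_integrable_cos_mul
    (g : ℝ → ℝ) (hg : Continuous g) (hgsupp : Function.support g ⊆ Icc (-(1/2)) (1/2))
    (φ : ℝ → ℝ) (hφ : Continuous φ) :
    Integrable (fun ξ : ℝ => Real.cos (φ ξ) * g ξ) := by
  have hcont : Continuous fun ξ : ℝ => Real.cos (φ ξ) * g ξ := by fun_prop
  have hcs : HasCompactSupport fun ξ : ℝ => Real.cos (φ ξ) * g ξ := by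
    apply HasCompactSupport.intro (isCompact_Icc (a := -(1/2 : ℝ)) (b := 1/2))
    intro ξ hξ
    have hgz : g ξ = 0 := by
      by_contra h
      exact hξ (hgsupp h)
    simp [hgz]
  exact hcont.integrable_of_hasCompactSupport hcs

/-- For `γ(x,t) = x − t^α` with `0 < α < 1/2` and `f̂_R(η) = (1/R) g(η/R)`:
for `c` sufficiently small and `R` large, for `x ∈ (cR^{−2α}/2, cR^{−2α})` and
`t_x = x^{1/α}`, the phase `Φ_R(ξ) = (x − t_x^α) R ξ + t_x R² ξ²` satisfies
`|Φ_R(ξ)| ≤ 1/100` for `|ξ| ≤ 1/2`, and consequently `|U_γ f_R(x,t_x)| ≥ 1/(4π)`. -/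
theorem phase_bound_and_lower_bound_tangential
    (α : ℝ) (hα : 0 < α) (hα2 : α < 1/2)
    (g : ℝ → ℝ)
    (hg : ContDiff ℝ (⊤ : ℕ∞) g) (hgsupp : Function.support g ⊆ Icc (-(1/2)) (1/2))
    (hgpos : ∀ ξ, 0 ≤ g ξ) (hgint : ∫ ξ : ℝ, g ξ = 1) :
    ∃ c₀ > (0:ℝ), ∀ c : ℝ, 0 < c → c ≤ c₀ → ∃ R₀ : ℝ, ∀ R : ℝ, R₀ ≤ R →
      ∀ x ∈ Ioo (c * R ^ (-(2*α)) / 2) (c * R ^ (-(2*α))),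
        (∀ ξ : ℝ, |ξ| ≤ 1/2 →
          |(x - (x ^ (1/α)) ^ α) * R * ξ + x ^ (1/α) * R ^ 2 * ξ ^ 2| ≤ 1/100)
        ∧ 1 / (4 * π) ≤ ‖Uminus α (fun η => ((1 / R) * g (η / R) : ℂ)) x (x ^ (1/α))‖ := by
  refine ⟨1/25, by norm_num, fun c hc hc25 => ⟨1, fun R hR x hx => ?_⟩⟩
  have hR0 : (0:ℝ) < R := lt_of_lt_of_le one_pos hR
  have hRne : (R:ℝ) ≠ 0 := hR0.ne'
  have hαne : α ≠ 0 := hα.ne'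
  -- positivity of x
  have hx0 : 0 < x := by
    have h1 : 0 < c * R ^ (-(2*α)) / 2 := by positivity
    exact h1.trans hx.1
  set t := x ^ (1/α) with ht
  have ht0 : 0 < t := Real.rpow_pos_of_pos hx0 _
  have htα : t ^ α = x := by
    rw [ht, ← Real.rpow_mul hx0.le, one_div_mul_cancel hαne, Real.rpow_one]
  -- key bound : t * R^2 ≤ c
  have hkey : t * R ^ 2 ≤ c := by
    have hle : x ≤ c * R ^ (-(2*α)) := hx.2.le
    have h1 : t ≤ (c * R ^ (-(2*α))) ^ (1/α) :=
      Real.rpow_le_rpow hx0.le hle (by positivity)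
    have h2 : (c * R ^ (-(2*α))) ^ (1/α) = c ^ (1/α) * (R ^ 2)⁻¹ := by
      rw [Real.mul_rpow hc.le (Real.rpow_nonneg hR0.le _),
        ← Real.rpow_natCast R 2, ← Real.rpow_mul hR0.le, ← Real.rpow_neg_one (R ^ ((2:ℕ):ℝ)),
        ← Real.rpow_mul hR0.le]
      congr 2
      field_simp
      norm_num
    have h3 : c ^ (1/α) ≤ c := by
      have h1α : 1 ≤ 1/α := by
        rw [le_div_iff₀ hα]; linarith
      calc c ^ (1/α) ≤ c ^ (1:ℝ) :=
            Real.rpow_le_rpow_of_exponent_ge hc (by linarith) h1α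
        _ = c := Real.rpow_one c
    have hR2 : (0:ℝ) < R ^ 2 := by positivity
    calc t * R ^ 2 ≤ (c ^ (1/α) * (R ^ 2)⁻¹) * R ^ 2 := by
          apply mul_le_mul_of_nonneg_right _ hR2.le
          rw [← h2]; exact h1
      _ = c ^ (1/α) := by field_simp
      _ ≤ c := h3
  -- Part 1
  have hpart1 : ∀ ξ : ℝ, |ξ| ≤ 1/2 →
      |(x - t ^ α) * R * ξ + t * R ^ 2 * ξ ^ 2| ≤ 1/100 := by
    intro ξ hξ
    rw [htα, sub_self, zero_mul, zero_mul, zero_add]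
    have hξ2 : ξ ^ 2 ≤ 1/4 := by
      have h := abs_le.mp hξ
      nlinarith
    have h0 : 0 ≤ t * R ^ 2 * ξ ^ 2 := by positivity
    rw [abs_of_nonneg h0]
    have hc' : c ≤ 1/25 := hc25
    have htR : 0 ≤ t * R ^ 2 := by positivity
    nlinarith
  refine ⟨hpart1, ?_⟩
  -- Part 2
  have hgc : Continuous g := hg.continuous
  have hgI : Integrable g := by
    refine hgc.integrable_of_hasCompactSupport ?_
    apply HasCompactSupport.intro (isCompact_Icc (a := -(1/2 : ℝ)) (b := 1/2))
    intro ξ hξ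
    by_contra h
    exact hξ (hgsupp h)
  -- the phase after rescaling
  set φ : ℝ → ℝ := fun ξ => t * R ^ 2 * ξ ^ 2 with hφdef
  have hφcont : Continuous φ := by fun_prop
  set J : ℂ := ∫ ξ : ℝ, Complex.exp (Complex.I * (φ ξ : ℂ)) * (g ξ : ℂ) with hJ
  have hJint : Integrable (fun ξ : ℝ => Complex.exp (Complex.I * (φ ξ : ℂ)) * (g ξ : ℂ)) :=
    aux_integrable_exp_mul g hgc hgsupp φ hφcont
  -- change of variables
  have hchange : (∫ η : ℝ, Complex.exp (Complex.I * (((x - t ^ α) * η + t * η ^ 2 : ℝ) : ℂ)) *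
      ((1 / (R:ℂ)) * ((g (η / R) : ℝ) : ℂ))) = J := by
    have hpt : ∀ η : ℝ, Complex.exp (Complex.I * (((x - t ^ α) * η + t * η ^ 2 : ℝ) : ℂ)) *
        ((1 / (R:ℂ)) * ((g (η / R) : ℝ) : ℂ)) =
        (fun ξ : ℝ => (1 / (R:ℂ)) * (Complex.exp (Complex.I * (φ ξ : ℂ)) * (g ξ : ℂ))) (η / R) := by
      intro η
      have hphase : (x - t ^ α) * η + t * η ^ 2 = φ (η / R) := by
        simp only [htα, sub_self, zero_mul, zero_add, hφdef]
        field_simp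
      rw [hphase]
      ring
    calc (∫ η : ℝ, Complex.exp (Complex.I * (((x - t ^ α) * η + t * η ^ 2 : ℝ) : ℂ)) *
          ((1 / (R:ℂ)) * ((g (η / R) : ℝ) : ℂ)))
        = ∫ η : ℝ, (fun ξ : ℝ => (1 / (R:ℂ)) *
            (Complex.exp (Complex.I * (φ ξ : ℂ)) * (g ξ : ℂ))) (η / R) := by
          exact integral_congr_ae (Filter.Eventually.of_forall hpt)
      _ = |R| • ∫ ξ : ℝ, (1 / (R:ℂ)) * (Complex.exp (Complex.I * (φ ξ : ℂ)) * (g ξ : ℂ)) :=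
          MeasureTheory.Measure.integral_comp_div
            (fun ξ : ℝ => (1 / (R:ℂ)) * (Complex.exp (Complex.I * (φ ξ : ℂ)) * (g ξ : ℂ))) R
      _ = |R| • ((1 / (R:ℂ)) * J) := by rw [integral_const_mul, hJ]
      _ = J := by
          rw [abs_of_pos hR0, Complex.real_smul]
          have hRC : (R:ℂ) ≠ 0 := by exact_mod_cast hRne
          field_simp
  -- real part of J
  have hre : J.re = ∫ ξ : ℝ, Real.cos (φ ξ) * g ξ := by
    have h := integral_re (μ := (volume : Measure ℝ)) hJint
    simp only [RCLike.re_to_complex] at h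
    have hptre : ∀ ξ : ℝ, (Complex.exp (Complex.I * (φ ξ : ℂ)) * (g ξ : ℂ)).re =
        Real.cos (φ ξ) * g ξ := by
      intro ξ
      rw [mul_comm Complex.I]
      simp [Complex.mul_re, Complex.exp_ofReal_mul_I_re, Complex.exp_ofReal_mul_I_im]
    rw [hJ, ← h]
    exact integral_congr_ae (Filter.Eventually.of_forall hptre)
  -- lower bound on the real part
  have hrebound : (1:ℝ)/2 ≤ J.re := by
    rw [hre]
    have hmono : ∀ ξ : ℝ, (1/2) * g ξ ≤ Real.cos (φ ξ) * g ξ := by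
      intro ξ
      by_cases hgz : g ξ = 0
      · simp [hgz]
      · have hmem : ξ ∈ Icc (-(1/2 : ℝ)) (1/2) := hgsupp hgz
        have hξabs : |ξ| ≤ 1/2 := abs_le.mpr ⟨hmem.1, hmem.2⟩
        have hφb : |φ ξ| ≤ 1/100 := by
          have := hpart1 ξ hξabs
          rw [htα, sub_self, zero_mul, zero_mul, zero_add] at this
          exact this
        have hcos : (1:ℝ)/2 ≤ Real.cos (φ ξ) := by
          have h1 := Real.one_sub_sq_div_two_le_cos (x := φ ξ)
          have h2 : (φ ξ) ^ 2 ≤ (1/100) ^ 2 := by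
            rw [← sq_abs]
            exact pow_le_pow_left₀ (abs_nonneg _) hφb 2
          nlinarith
        exact mul_le_mul_of_nonneg_right hcos (hgpos ξ)
    have hint1 : Integrable (fun ξ : ℝ => (1/2 : ℝ) * g ξ) := hgI.const_mul _
    have hint2 : Integrable (fun ξ : ℝ => Real.cos (φ ξ) * g ξ) :=
      aux_integrable_cos_mul g hgc hgsupp φ hφcont
    calc (1:ℝ)/2 = ∫ ξ : ℝ, (1/2 : ℝ) * g ξ := by
          rw [integral_const_mul, hgint]; norm_num
      _ ≤ ∫ ξ : ℝ, Real.cos (φ ξ) * g ξ := integral_mono hint1 hint2 hmono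
  -- conclude
  have hJnorm : (1:ℝ)/2 ≤ ‖J‖ := le_trans hrebound (Complex.re_le_norm J)
  have hU : Uminus α (fun η => ((1 / R) * g (η / R) : ℂ)) x t = (1 / (2 * (π:ℂ))) * J := by
    rw [Uminus, hchange]
  rw [hU]
  rw [norm_mul]
  have hnorm1 : ‖(1 / (2 * (π:ℂ)))‖ = 1 / (2 * π) := by
    have : (1 / (2 * (π:ℂ))) = ((1 / (2 * π) : ℝ) : ℂ) := by push_cast; ring
    rw [this, Complex.norm_real, norm_of_nonneg (by positivity)]
  rw [hnorm1]
  have hπ : (0:ℝ) < π := Real.pi_pos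
  calc (1:ℝ) / (4 * π) = (1 / (2 * π)) * (1/2) := by field_simp; ring
    _ ≤ (1 / (2 * π)) * ‖J‖ := by
        apply mul_le_mul_of_nonneg_left hJnorm (by positivity)
end

section
/- Let γ : ℝ × [−1,1] → ℝ be α-Hölder continuous in t with constant 1 for some 0 < α ≤ 1 and γ(x,0) = x, and let f_k be Schwartz on ℝ with supp f̂_k ⊂ {ξ : 2^{k−1} ≤ |ξ| ≤ 2^{k+1}}. Then for δ ∈ [0, α), ‖sup_{0<t<2^{−k/α}} |f_k(γ(x,t)) − f_k(x)|/t^δ‖_{L²([−1,1])} ≤ C 2^{δk/α} ‖f_k‖_{L²(ℝ)}. -/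
open MeasureTheory Real Set
open scoped ENNReal

/-- The Fourier transform `f̂(ξ) = ∫ e^{-ixξ} f(x) dx`. -/
noncomputable def ftrans (f : ℝ → ℂ) (ξ : ℝ) : ℂ :=
  ∫ x : ℝ, Complex.exp (-(Complex.I * ((x * ξ : ℝ) : ℂ))) * f x

section Aux

open Complex FourierTransform

lemma ftrans_eq_fourier (f : ℝ → ℂ) (w : ℝ) : 𝓕 f w = ftrans f (2 * π * w) := by
  rw [Real.fourier_real_eq]
  unfold ftrans
  congr 1 with x
  rw [Circle.smul_def, Real.fourierChar_apply, smul_eq_mul]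
  congr 2
  push_cast
  ring

lemma plancherel_schwartz (f : SchwartzMap ℝ ℂ) :
    ∫ ξ : ℝ, ‖𝓕 (⇑f) ξ‖ ^ 2 = ∫ x : ℝ, ‖f x‖ ^ 2 := by
  have hf : Integrable (⇑f) volume := f.integrable
  have hFf : Integrable (𝓕 (⇑f)) volume := by
    have := (𝓕 f).integrable (μ := volume)
    rwa [SchwartzMap.fourier_coe] at this
  set g : ℝ → ℂ := fun ξ => (starRingEnd ℂ) (𝓕 (⇑f) ξ) with hg
  have hgint : Integrable g volume :=
    ⟨Complex.continuous_conj.comp_aestronglyMeasurable hFf.1,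
     by simpa [HasFiniteIntegral, g] using hFf.2⟩
  have hflip : (innerₗ ℝ).flip = innerₗ ℝ := by
    apply LinearMap.ext; intro x; apply LinearMap.ext; intro y
    simp [real_inner_comm]
  have hFg : ∀ x, 𝓕 g x = (starRingEnd ℂ) (f x) := by
    intro x
    have inv : 𝓕⁻ (𝓕 ⇑f) x = f x := hf.fourierInv_fourier_eq hFf f.continuous.continuousAt
    rw [← inv]
    rw [Real.fourier_real_eq, Real.fourierInv_eq, ← integral_conj]
    congr 1 with ξ
    have hin : (inner ℝ ξ x : ℝ) = ξ * x := by simp [RCLike.inner_apply', conj_trivial, mul_comm]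
    simp only [g, Circle.smul_def, Real.fourierChar_apply, smul_eq_mul, map_mul,
      ← Complex.exp_conj, map_add, map_neg, Complex.conj_I, Complex.conj_ofReal, hin]
    push_cast
    ring_nf
  have mult := VectorFourier.integral_fourierIntegral_smul_eq_flip (L := innerₗ ℝ)
    Real.continuous_fourierChar continuous_inner hf hgint
  rw [hflip] at mult
  have lhs : ∫ ξ, (VectorFourier.fourierIntegral 𝐞 volume (innerₗ ℝ) (⇑f) ξ) • g ξ
      = ∫ ξ : ℝ, ((‖𝓕 (⇑f) ξ‖ ^ 2 : ℝ) : ℂ) := by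
    congr 1 with ξ
    have : VectorFourier.fourierIntegral 𝐞 volume (innerₗ ℝ) (⇑f) ξ = 𝓕 (⇑f) ξ := rfl
    rw [this, smul_eq_mul, hg, Complex.mul_conj, Complex.normSq_eq_norm_sq]
  have rhs : ∫ x, f x • (VectorFourier.fourierIntegral 𝐞 volume (innerₗ ℝ) g x)
      = ∫ x : ℝ, ((‖f x‖ ^ 2 : ℝ) : ℂ) := by
    congr 1 with x
    have : VectorFourier.fourierIntegral 𝐞 volume (innerₗ ℝ) g x = 𝓕 g x := rfl
    rw [this, hFg x, smul_eq_mul, Complex.mul_conj, Complex.normSq_eq_norm_sq]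
  
  have l2 : ∫ ξ : ℝ, ((‖𝓕 (⇑f) ξ‖ ^ 2 : ℝ) : ℂ) = ((∫ ξ : ℝ, ‖𝓕 (⇑f) ξ‖ ^ 2 : ℝ) : ℂ) :=
    integral_ofReal
  have r2 : ∫ x : ℝ, ((‖f x‖ ^ 2 : ℝ) : ℂ) = ((∫ x : ℝ, ‖f x‖ ^ 2 : ℝ) : ℂ) := integral_ofReal
  rw [lhs, rhs, l2, r2] at mult
  exact_mod_cast mult

lemma schwartz_memℒp2 (f : SchwartzMap ℝ ℂ) : MemLp (⇑f) 2 volume := by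
  rw [memLp_two_iff_integrable_sq_norm f.continuous.aestronglyMeasurable]
  obtain ⟨C, hC⟩ := f.decay 0 0
  have : Integrable (fun x : ℝ => ‖f x‖ * ‖f x‖) volume := by
    refine f.integrable.norm.bdd_mul (c := C) ?_ (Filter.Eventually.of_forall fun x => by simpa using hC.2 x)
    exact f.continuous.norm.aestronglyMeasurable
  simpa [sq] using this

lemma plancherel_eLpNorm (f : SchwartzMap ℝ ℂ) :
    eLpNorm (𝓕 (⇑f)) 2 volume = eLpNorm (⇑f) 2 volume := by
  have hFf : MemLp (𝓕 (⇑f)) 2 volume := by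
    have := schwartz_memℒp2 (𝓕 f)
    rwa [SchwartzMap.fourier_coe] at this
  rw [hFf.eLpNorm_eq_integral_rpow_norm two_ne_zero ENNReal.ofNat_ne_top,
    (schwartz_memℒp2 f).eLpNorm_eq_integral_rpow_norm two_ne_zero ENNReal.ofNat_ne_top]
  congr 1
  have h2 : (2 : ℝ≥0∞).toReal = (2 : ℝ) := by simp
  rw [h2]
  congr 1
  have e1 : ∀ g : ℝ → ℂ, (∫ a : ℝ, ‖g a‖ ^ (2:ℝ)) = ∫ a : ℝ, ‖g a‖ ^ (2:ℕ) := by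
    intro g; congr 1 with a
    rw [← Real.rpow_natCast ‖g a‖ 2]; norm_num
  rw [e1, e1, plancherel_schwartz]

lemma bernstein_ineq (f : SchwartzMap ℝ ℂ) (B : ℝ) (hB : 0 ≤ B)
    (hsupp : ∀ w : ℝ, 𝓕 (⇑f) w ≠ 0 → |2 * π * w| ≤ B) :
    eLpNorm (deriv (⇑f)) 2 volume ≤ ENNReal.ofReal B * eLpNorm (⇑f) 2 volume := by
  have hderiv : deriv (⇑f) = ⇑(SchwartzMap.derivCLM ℝ ℂ f) := by
    ext x; simp [SchwartzMap.derivCLM_apply]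
  have key : 𝓕 (deriv (⇑f)) = fun (x : ℝ) ↦ (2 * π * I * x) • (𝓕 (⇑f) x) := by
    refine Real.fourier_deriv f.integrable f.differentiable ?_
    rw [hderiv]; exact (SchwartzMap.derivCLM ℝ ℂ f).integrable
  have e1 : eLpNorm (deriv (⇑f)) 2 volume = eLpNorm (𝓕 (deriv (⇑f))) 2 volume := by
    rw [hderiv, plancherel_eLpNorm (SchwartzMap.derivCLM ℝ ℂ f)]
  rw [e1, key]
  have mono : eLpNorm (fun x : ℝ => (2 * π * I * x) • 𝓕 (⇑f) x) 2 volume ≤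
      eLpNorm (B • (fun x : ℝ => ‖𝓕 (⇑f) x‖)) 2 volume := by
    apply eLpNorm_mono
    intro x
    by_cases h : 𝓕 (⇑f) x = 0
    · simp [h, mul_nonneg hB (norm_nonneg _), Pi.smul_apply, abs_of_nonneg,
        mul_nonneg hB]
    · have hb := hsupp x h
      rw [norm_smul, Pi.smul_apply, smul_eq_mul, Real.norm_eq_abs, abs_mul,
        _root_.abs_of_nonneg hB, abs_norm]
      have : ‖(2 * ↑π * I * (x:ℂ))‖ = |2 * π * x| := by
        simp [abs_mul, norm_mul, _root_.abs_of_nonneg Real.pi_nonneg]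
      rw [this]
      exact mul_le_mul_of_nonneg_right hb (norm_nonneg _)
  refine mono.trans ?_
  rw [eLpNorm_const_smul, ← plancherel_eLpNorm f, ← eLpNorm_norm (𝓕 ⇑f)]
  have : ‖B‖ₑ = ENNReal.ofReal B := by
    exact Real.enorm_eq_ofReal hB
  rw [this]

lemma conv_bound (u : ℝ → ℂ) (hu : Continuous u) (r : ℝ) (hr : 0 < r) :
    eLpNorm (fun x => ∫ y in Icc (x - r) (x + r), ‖u y‖) 2 volume ≤
      ENNReal.ofReal (2 * r) * eLpNorm u 2 volume := by
  set φ : ℝ → ℝ≥0∞ := fun y => (‖u y‖₊ : ℝ≥0∞) with hφ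
  have hφm : Measurable φ := hu.measurable.nnnorm.coe_nnreal_ennreal
  set ψ : ℝ → ℝ≥0∞ := fun y => φ y * φ y with hψ
  have hψm : Measurable ψ := hφm.mul hφm
  have hIcc : ∀ x : ℝ, Icc (x - r) (x + r) = Metric.closedBall x r := fun x =>
    Real.closedBall_eq_Icc.symm
  -- step 1 : enorm of h x equals lintegral
  have key : ∀ x : ℝ, (‖∫ y in Icc (x - r) (x + r), ‖u y‖‖₊ : ℝ≥0∞)
      = ∫⁻ y in Icc (x - r) (x + r), φ y := by
    intro x
    have hint : IntegrableOn (fun y => ‖u y‖) (Icc (x - r) (x + r)) volume :=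
      (hu.norm.integrableOn_Icc)
    have h0 : 0 ≤ ∫ y in Icc (x - r) (x + r), ‖u y‖ :=
      integral_nonneg fun y => norm_nonneg _
    rw [← enorm_eq_nnnorm, ← ofReal_norm, Real.norm_of_nonneg h0,
      ofReal_integral_eq_lintegral_ofReal hint (Filter.Eventually.of_forall fun y => norm_nonneg _)]
    congr 1 with y
    rw [ofReal_norm, enorm_eq_nnnorm]
  -- step 2 : Cauchy-Schwarz on each interval
  have CS : ∀ x : ℝ, (∫⁻ y in Icc (x - r) (x + r), φ y) ^ (2:ℕ)
      ≤ ENNReal.ofReal (2 * r) * ∫⁻ y in Icc (x - r) (x + r), ψ y := by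
    intro x
    have hpq : Real.HolderConjugate 2 2 := Real.HolderConjugate.two_two
    have := ENNReal.lintegral_mul_le_Lp_mul_Lq (volume.restrict (Icc (x - r) (x + r))) hpq
      (aemeasurable_const (b := (1:ℝ≥0∞))) hφm.aemeasurable
    simp only [Pi.mul_apply, one_mul] at this
    have hvol : (volume (Icc (x - r) (x + r))) = ENNReal.ofReal (2 * r) := by
      rw [Real.volume_Icc]; ring_nf
    have h1 : (∫⁻ _ in Icc (x - r) (x + r), (1:ℝ≥0∞) ^ (2:ℝ)) = ENNReal.ofReal (2 * r) := by
      simp [hvol]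
    rw [h1] at this
    have hψeq : (∫⁻ y in Icc (x - r) (x + r), φ y ^ (2:ℝ))
        = ∫⁻ y in Icc (x - r) (x + r), ψ y := by
      congr 1 with y
      rw [hψ]
      rw [show ((2:ℝ) = ((2:ℕ):ℝ)) by norm_num, ENNReal.rpow_natCast, sq]
    rw [hψeq] at this
    calc (∫⁻ y in Icc (x - r) (x + r), φ y) ^ (2:ℕ)
        ≤ (ENNReal.ofReal (2 * r) ^ (1/2:ℝ) * (∫⁻ y in Icc (x - r) (x + r), ψ y) ^ (1/2:ℝ)) ^ (2:ℕ) := by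
          exact pow_le_pow_left' this 2
      _ = ENNReal.ofReal (2 * r) * ∫⁻ y in Icc (x - r) (x + r), ψ y := by
          rw [mul_pow, ← ENNReal.rpow_natCast (ENNReal.ofReal (2*r) ^ (1/2:ℝ)) 2,
            ← ENNReal.rpow_natCast ((∫⁻ y in Icc (x - r) (x + r), ψ y) ^ (1/2:ℝ)) 2,
            ← ENNReal.rpow_mul, ← ENNReal.rpow_mul]
          norm_num
  -- step 3 : Tonelli
  have swap : (∫⁻ x : ℝ, ∫⁻ y in Icc (x - r) (x + r), ψ y)
      = ENNReal.ofReal (2 * r) * ∫⁻ y : ℝ, ψ y := by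
    have hT : MeasurableSet {p : ℝ × ℝ | |p.2 - p.1| ≤ r} := by
      apply IsClosed.measurableSet
      exact isClosed_le (continuous_snd.sub continuous_fst).abs continuous_const
    set F : ℝ → ℝ → ℝ≥0∞ :=
      fun x y => ({p : ℝ × ℝ | |p.2 - p.1| ≤ r}).indicator (fun p => ψ p.2) (x, y) with hF
    have hFm : Measurable (Function.uncurry F) := by
      have : Function.uncurry F = ({p : ℝ × ℝ | |p.2 - p.1| ≤ r}).indicator (fun p => ψ p.2) :=
        rfl
      rw [this]
      exact (hψm.comp measurable_snd).indicator hT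
    have habs : ∀ x y : ℝ, (y ∈ Icc (x - r) (x + r)) ↔ |y - x| ≤ r := by
      intro x y
      rw [Set.mem_Icc, abs_le]
      constructor <;> (intro h; constructor <;> linarith [h.1, h.2])
    have inner_eq : ∀ x : ℝ, (∫⁻ y in Icc (x - r) (x + r), ψ y) = ∫⁻ y, F x y := by
      intro x
      rw [← lintegral_indicator measurableSet_Icc]
      congr 1 with y
      rw [hF]
      simp only [Set.indicator_apply, Set.mem_setOf_eq]
      exact if_congr (habs x y) rfl rfl
    have outer_eq : ∀ y : ℝ, (∫⁻ x, F x y) = ENNReal.ofReal (2 * r) * ψ y := by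
      intro y
      have : ∀ x : ℝ, F x y = (Icc (y - r) (y + r)).indicator (fun _ => ψ y) x := by
        intro x
        rw [hF]
        simp only [Set.indicator_apply, Set.mem_setOf_eq]
        refine if_congr ?_ rfl rfl
        rw [habs y x, abs_sub_comm]
      simp_rw [this]
      rw [lintegral_indicator measurableSet_Icc, setLIntegral_const, Real.volume_Icc, mul_comm]
      congr 1
      ring_nf
    calc (∫⁻ x : ℝ, ∫⁻ y in Icc (x - r) (x + r), ψ y)
        = ∫⁻ x : ℝ, ∫⁻ y, F x y := by simp_rw [inner_eq]
      _ = ∫⁻ y : ℝ, ∫⁻ x, F x y := lintegral_lintegral_swap hFm.aemeasurable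
      _ = ∫⁻ y : ℝ, ENNReal.ofReal (2 * r) * ψ y := by simp_rw [outer_eq]
      _ = ENNReal.ofReal (2 * r) * ∫⁻ y : ℝ, ψ y :=
          lintegral_const_mul' _ _ ENNReal.ofReal_ne_top
  -- assembly
  rw [eLpNorm_eq_lintegral_rpow_enorm_toReal two_ne_zero ENNReal.ofNat_ne_top,
    eLpNorm_eq_lintegral_rpow_enorm_toReal two_ne_zero ENNReal.ofNat_ne_top]
  simp only [enorm_eq_nnnorm]
  have htR : (2 : ℝ≥0∞).toReal = ((2:ℕ):ℝ) := by norm_num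
  simp_rw [htR, ENNReal.rpow_natCast]
  have main : (∫⁻ x : ℝ, (‖∫ y in Icc (x - r) (x + r), ‖u y‖‖₊ : ℝ≥0∞) ^ (2:ℕ))
      ≤ ENNReal.ofReal (2 * r) ^ (2:ℕ) * ∫⁻ y : ℝ, (‖u y‖₊ : ℝ≥0∞) ^ (2:ℕ) := by
    calc (∫⁻ x : ℝ, (‖∫ y in Icc (x - r) (x + r), ‖u y‖‖₊ : ℝ≥0∞) ^ (2:ℕ))
        = ∫⁻ x : ℝ, (∫⁻ y in Icc (x - r) (x + r), φ y) ^ (2:ℕ) := by simp_rw [key]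
      _ ≤ ∫⁻ x : ℝ, ENNReal.ofReal (2 * r) * ∫⁻ y in Icc (x - r) (x + r), ψ y :=
          lintegral_mono fun x => CS x
      _ = ENNReal.ofReal (2 * r) * ∫⁻ x : ℝ, ∫⁻ y in Icc (x - r) (x + r), ψ y :=
          lintegral_const_mul' _ _ ENNReal.ofReal_ne_top
      _ = ENNReal.ofReal (2 * r) * (ENNReal.ofReal (2 * r) * ∫⁻ y : ℝ, ψ y) := by rw [swap]
      _ = ENNReal.ofReal (2 * r) ^ (2:ℕ) * ∫⁻ y : ℝ, (‖u y‖₊ : ℝ≥0∞) ^ (2:ℕ) := by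
          rw [← mul_assoc, ← sq]
          congr 1
          congr 1 with y
          rw [hψ, hφ, sq]
  have hmono := ENNReal.rpow_le_rpow main (by norm_num : (0:ℝ) ≤ 1/2)
  calc (∫⁻ x : ℝ, (‖∫ y in Icc (x - r) (x + r), ‖u y‖‖₊ : ℝ≥0∞) ^ (2:ℕ)) ^ (1/(2:ℝ≥0∞).toReal)
      ≤ (ENNReal.ofReal (2 * r) ^ (2:ℕ) * ∫⁻ y : ℝ, (‖u y‖₊ : ℝ≥0∞) ^ (2:ℕ)) ^ (1/(2:ℝ≥0∞).toReal) := by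
        rw [htR]
        push_cast
        exact hmono
    _ = ENNReal.ofReal (2 * r) * (∫⁻ y : ℝ, (‖u y‖₊ : ℝ≥0∞) ^ (2:ℕ)) ^ (1/(2:ℝ≥0∞).toReal) := by
        rw [htR]
        push_cast
        rw [ENNReal.mul_rpow_of_nonneg _ _ (by norm_num : (0:ℝ) ≤ 1/2),
          ← ENNReal.rpow_natCast (ENNReal.ofReal (2*r)) 2, ← ENNReal.rpow_mul]
        norm_num

end Aux

section Main

open Complex FourierTransform

/-- For `γ : ℝ × [−1,1] → ℝ` `α`-Hölder in `t` with constant `1` (`0 < α ≤ 1`),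
`γ(x,0) = x`, and `f_k` Schwartz with `supp f̂_k ⊂ {2^{k−1} ≤ |ξ| ≤ 2^{k+1}}`, for
`δ ∈ [0,α)`:
`‖sup_{0<t<2^{−k/α}} |f_k(γ(x,t)) − f_k(x)|/t^δ‖_{L²([−1,1])} ≤ C 2^{δk/α} ‖f_k‖_{L²}`. -/
theorem translation_term_bound_holder
    (α : ℝ) (hα : 0 < α) (hα1 : α ≤ 1)
    (γ : ℝ → ℝ → ℝ)
    (hγ0 : ∀ x, γ x 0 = x)
    (hγhol : ∀ x t t', t ∈ Icc (-1:ℝ) 1 → t' ∈ Icc (-1:ℝ) 1 →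
      |γ x t - γ x t'| ≤ |t - t'| ^ α) :
    ∃ C > (0:ℝ), ∀ (k : ℕ) (δ : ℝ), δ ∈ Ico (0:ℝ) α →
      ∀ f : SchwartzMap ℝ ℂ,
        (Function.support (ftrans fun y => f y) ⊆
          {ξ | (2:ℝ) ^ k / 2 ≤ |ξ| ∧ |ξ| ≤ 2 * (2:ℝ) ^ k}) →
        eLpNorm
          (fun x => ⨆ t ∈ Ioo (0:ℝ) ((2:ℝ) ^ (-((k:ℝ) / α))), ‖f (γ x t) - f x‖ / t ^ δ) 2
          (volume.restrict (Icc (-1:ℝ) 1))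
        ≤ ENNReal.ofReal (C * (2:ℝ) ^ (δ * (k:ℝ) / α)) * eLpNorm (fun y => f y) 2 volume := by
  refine ⟨10, by norm_num, ?_⟩
  intro k δ hδ f hsupp
  set F' : SchwartzMap ℝ ℂ := SchwartzMap.derivCLM ℝ ℂ f with hF'def
  set F'' : SchwartzMap ℝ ℂ := SchwartzMap.derivCLM ℝ ℂ F' with hF''def
  have hder1 : deriv (⇑f) = ⇑F' := by
    ext x; simp [hF'def, SchwartzMap.derivCLM_apply]
  have hder2 : deriv (⇑F') = ⇑F'' := by
    ext x; simp [hF''def, SchwartzMap.derivCLM_apply]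
  set B : ℝ := 2 * 2 ^ k with hBdef
  have hBpos : (0:ℝ) < B := by positivity
  -- support facts
  have hsupp1 : ∀ w : ℝ, 𝓕 (⇑f) w ≠ 0 → |2 * π * w| ≤ B := by
    intro w hw
    have h1 : ftrans (fun y => f y) (2 * π * w) ≠ 0 := by
      rw [← ftrans_eq_fourier]; exact hw
    exact (hsupp (Function.mem_support.mpr h1)).2
  have key1 : 𝓕 (deriv (⇑f)) = fun (x : ℝ) ↦ (2 * π * I * x) • (𝓕 (⇑f) x) :=
    Real.fourier_deriv f.integrable f.differentiable
      (by rw [hder1]; exact F'.integrable)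
  have hsupp2 : ∀ w : ℝ, 𝓕 (⇑F') w ≠ 0 → |2 * π * w| ≤ B := by
    intro w hw
    rw [← hder1, key1] at hw
    refine hsupp1 w fun h0 => hw ?_
    simp [h0]
  have bern1 : eLpNorm (⇑F') 2 volume ≤ ENNReal.ofReal B * eLpNorm (⇑f) 2 volume := by
    have := bernstein_ineq f B hBpos.le hsupp1
    rwa [hder1] at this
  have bern2 : eLpNorm (⇑F'') 2 volume ≤ ENNReal.ofReal B * eLpNorm (⇑F') 2 volume := by
    have := bernstein_ineq F' B hBpos.le hsupp2
    rwa [hder2] at this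
  -- radius and time bound
  set r : ℝ := (2:ℝ) ^ (-(k:ℝ)) with hrdef
  have hrpos : 0 < r := Real.rpow_pos_of_pos two_pos _
  set T : ℝ := (2:ℝ) ^ (-((k:ℝ)/α)) with hTdef
  have hTpos : 0 < T := Real.rpow_pos_of_pos two_pos _
  have hT1 : T ≤ 1 := by
    apply Real.rpow_le_one_of_one_le_of_nonpos one_le_two
    have : 0 ≤ (k:ℝ)/α := div_nonneg (Nat.cast_nonneg k) hα.le
    linarith
  have hTα : T ^ α = r := by
    rw [hTdef, ← Real.rpow_mul (by norm_num : (0:ℝ) ≤ 2), hrdef]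
    congr 1
    field_simp
  -- the auxiliary dominating function
  set g : ℝ → ℝ := fun x => ‖F' x‖ + ∫ y in Icc (x - r) (x + r), ‖F'' y‖ with hgdef
  have hgnonneg : ∀ x, 0 ≤ g x := fun x =>
    add_nonneg (norm_nonneg _) (integral_nonneg fun y => norm_nonneg _)
  -- the derivative is bounded by g x on the interval around x
  have hF'bound : ∀ x : ℝ, ∀ y ∈ Icc (x - r) (x + r), ‖F' y‖ ≤ g x := by
    intro x y hy
    have ftc : (∫ u in x..y, deriv (⇑F') u) = F' y - F' x := by
      apply intervalIntegral.integral_deriv_eq_sub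
      · exact fun u _ => F'.differentiable.differentiableAt
      · rw [hder2]; exact F''.continuous.intervalIntegrable _ _
    have hsub : Set.uIoc x y ⊆ Icc (x - r) (x + r) := by
      intro u hu
      rcases hu with ⟨h1, h2⟩
      constructor
      · exact le_of_lt (lt_of_le_of_lt (le_min (by linarith [hy.1, hy.2]) hy.1) h1)
      · exact h2.trans (max_le (by linarith [hy.1, hy.2]) hy.2)
    have hdiff : ‖F' y - F' x‖ ≤ ∫ u in Icc (x - r) (x + r), ‖F'' u‖ := by
      rw [← ftc]
      refine (intervalIntegral.norm_integral_le_integral_norm_uIoc).trans ?_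
      rw [hder2]
      refine setIntegral_mono_set (F''.continuous.norm.integrableOn_Icc)
        (Filter.Eventually.of_forall fun u => norm_nonneg _) (HasSubset.Subset.eventuallyLE hsub)
    calc ‖F' y‖ = ‖F' x + (F' y - F' x)‖ := by ring_nf
      _ ≤ ‖F' x‖ + ‖F' y - F' x‖ := norm_add_le _ _
      _ ≤ g x := by rw [hgdef]; exact add_le_add le_rfl hdiff
  -- the constant
  set c : ℝ := r * (2:ℝ) ^ (δ * (k:ℝ) / α) with hcdef
  have hcpos : 0 < c := mul_pos hrpos (Real.rpow_pos_of_pos two_pos _)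
  have hTαδ : T ^ (α - δ) = c := by
    rw [hTdef, ← Real.rpow_mul (by norm_num : (0:ℝ) ≤ 2), hcdef, hrdef,
      ← Real.rpow_add two_pos]
    congr 1
    field_simp
    ring
  -- pointwise bound for the supremum
  have hΦ : ∀ x : ℝ, (⨆ t ∈ Ioo (0:ℝ) T, ‖f (γ x t) - f x‖ / t ^ δ) ≤ c * g x := by
    intro x
    have hc0 : 0 ≤ c * g x := mul_nonneg hcpos.le (hgnonneg x)
    refine Real.iSup_le (fun t => Real.iSup_le (fun ht => ?_) hc0) hc0
    have ht0 : 0 < t := ht.1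
    have htT : t < T := ht.2
    have htIcc : t ∈ Icc (-1:ℝ) 1 := ⟨by linarith, le_of_lt (lt_of_lt_of_le htT hT1)⟩
    have hγb : |γ x t - x| ≤ t ^ α := by
      have := hγhol x t 0 htIcc (by norm_num)
      rwa [hγ0 x, sub_zero, abs_of_pos ht0] at this
    have htα : t ^ α ≤ r := by
      rw [← hTα]
      exact Real.rpow_le_rpow ht0.le htT.le hα.le
    have hmem : γ x t ∈ Icc (x - r) (x + r) := by
      have h2 := abs_le.mp (hγb.trans htα)
      exact ⟨by linarith [h2.1], by linarith [h2.2]⟩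
    have hxmem : x ∈ Icc (x - r) (x + r) := ⟨by linarith, by linarith⟩
    have hmvt : ‖f (γ x t) - f x‖ ≤ g x * |γ x t - x| := by
      have := (convex_Icc (x - r) (x + r)).norm_image_sub_le_of_norm_deriv_le
        (fun y _ => f.differentiable.differentiableAt)
        (fun y hy => by rw [hder1]; exact hF'bound x y hy)
        hxmem hmem
      simpa [Real.norm_eq_abs] using this
    have htδ : 0 < t ^ δ := Real.rpow_pos_of_pos ht0 δ
    rw [div_le_iff₀ htδ]
    have hexp : t ^ α = t ^ (α - δ) * t ^ δ := by
      rw [← Real.rpow_add ht0]; congr 1; ring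
    have htαδ : t ^ (α - δ) ≤ c := by
      rw [← hTαδ]
      exact Real.rpow_le_rpow ht0.le htT.le (by linarith [hδ.2])
    calc ‖f (γ x t) - f x‖ ≤ g x * |γ x t - x| := hmvt
      _ ≤ g x * t ^ α := mul_le_mul_of_nonneg_left (hγb.trans_eq rfl) (hgnonneg x)
      _ = g x * (t ^ (α - δ) * t ^ δ) := by rw [← hexp]
      _ ≤ g x * (c * t ^ δ) := by
          refine mul_le_mul_of_nonneg_left (mul_le_mul_of_nonneg_right htαδ htδ.le) (hgnonneg x)
      _ = c * g x * t ^ δ := by ring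
  -- L² chain
  set E : ℝ≥0∞ := eLpNorm (⇑f) 2 volume with hEdef
  have step1 : eLpNorm
      (fun x => ⨆ t ∈ Ioo (0:ℝ) T, ‖f (γ x t) - f x‖ / t ^ δ) 2
      (volume.restrict (Icc (-1:ℝ) 1))
      ≤ ENNReal.ofReal c * eLpNorm g 2 volume := by
    have m1 : eLpNorm (fun x => ⨆ t ∈ Ioo (0:ℝ) T, ‖f (γ x t) - f x‖ / t ^ δ) 2
        (volume.restrict (Icc (-1:ℝ) 1)) ≤
        eLpNorm (c • g) 2 (volume.restrict (Icc (-1:ℝ) 1)) := by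
      apply eLpNorm_mono
      intro x
      have hnn : 0 ≤ ⨆ t ∈ Ioo (0:ℝ) T, ‖f (γ x t) - f x‖ / t ^ δ :=
        Real.iSup_nonneg fun t => Real.iSup_nonneg fun ht =>
          div_nonneg (norm_nonneg _) (Real.rpow_nonneg ht.1.le δ)
      rw [Real.norm_eq_abs, Real.norm_eq_abs, _root_.abs_of_nonneg hnn, Pi.smul_apply,
        smul_eq_mul, _root_.abs_of_nonneg (mul_nonneg hcpos.le (hgnonneg x))]
      exact hΦ x
    have m2 : eLpNorm (c • g) 2 (volume.restrict (Icc (-1:ℝ) 1))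
        = ENNReal.ofReal c * eLpNorm g 2 (volume.restrict (Icc (-1:ℝ) 1)) := by
      rw [eLpNorm_const_smul]
      congr 1
      exact Real.enorm_eq_ofReal hcpos.le
    have m3 : eLpNorm g 2 (volume.restrict (Icc (-1:ℝ) 1)) ≤ eLpNorm g 2 volume :=
      eLpNorm_mono_measure _ Measure.restrict_le_self
    calc eLpNorm (fun x => ⨆ t ∈ Ioo (0:ℝ) T, ‖f (γ x t) - f x‖ / t ^ δ) 2
          (volume.restrict (Icc (-1:ℝ) 1))
        ≤ eLpNorm (c • g) 2 (volume.restrict (Icc (-1:ℝ) 1)) := m1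
      _ = ENNReal.ofReal c * eLpNorm g 2 (volume.restrict (Icc (-1:ℝ) 1)) := m2
      _ ≤ ENNReal.ofReal c * eLpNorm g 2 volume := mul_le_mul_right m3 _
  -- continuity of the local integral term
  have hint : ∀ a b : ℝ, IntervalIntegrable (fun y => ‖F'' y‖) volume a b :=
    fun a b => F''.continuous.norm.intervalIntegrable a b
  have hcont : Continuous (fun x : ℝ => ∫ y in Icc (x - r) (x + r), ‖F'' y‖) := by
    have hG : Continuous (fun b : ℝ => ∫ y in (0:ℝ)..b, ‖F'' y‖) :=
      intervalIntegral.continuous_primitive hint 0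
    have heq : (fun x : ℝ => ∫ y in Icc (x - r) (x + r), ‖F'' y‖)
        = fun x => (∫ y in (0:ℝ)..(x + r), ‖F'' y‖) - ∫ y in (0:ℝ)..(x - r), ‖F'' y‖ := by
      funext x
      have h1 : x - r ≤ x + r := by linarith
      rw [MeasureTheory.integral_Icc_eq_integral_Ioc, ← intervalIntegral.integral_of_le h1,
        eq_sub_iff_add_eq, add_comm]
      exact intervalIntegral.integral_add_adjacent_intervals (hint 0 (x - r)) (hint (x - r) (x + r))
    rw [heq]
    exact (hG.comp (continuous_id.add continuous_const)).sub
      (hG.comp (continuous_id.sub continuous_const))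
  have step2 : eLpNorm g 2 volume ≤
      eLpNorm (⇑F') 2 volume + ENNReal.ofReal (2 * r) * eLpNorm (⇑F'') 2 volume := by
    have tri : eLpNorm g 2 volume ≤
        eLpNorm (fun x => ‖F' x‖) 2 volume +
          eLpNorm (fun x => ∫ y in Icc (x - r) (x + r), ‖F'' y‖) 2 volume := by
      have : g = (fun x => ‖F' x‖) + (fun x => ∫ y in Icc (x - r) (x + r), ‖F'' y‖) := rfl
      rw [this]
      exact eLpNorm_add_le (F'.continuous.norm.aestronglyMeasurable)
        hcont.aestronglyMeasurable one_le_two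
    refine tri.trans (add_le_add ?_ ?_)
    · rw [eLpNorm_norm]
    · exact conv_bound (⇑F'') F''.continuous r hrpos
  -- combine everything
  have b2' : eLpNorm (⇑F'') 2 volume ≤ ENNReal.ofReal B * (ENNReal.ofReal B * E) :=
    bern2.trans (mul_le_mul_right bern1 _)
  have hrk : r * (2:ℝ) ^ k = 1 := by
    rw [hrdef, ← Real.rpow_natCast 2 k, ← Real.rpow_add two_pos]
    simp
  have harith : c * (B + 2 * r * (B * B)) = 10 * (2:ℝ) ^ (δ * (k:ℝ) / α) := by
    have expand : c * (B + 2 * r * (B * B)) =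
        (2:ℝ) ^ (δ * (k:ℝ) / α) * (2 * (r * 2 ^ k) + 8 * ((r * 2 ^ k) * (r * 2 ^ k))) := by
      rw [hcdef, hBdef]; ring
    rw [expand, hrk]
    ring
  calc eLpNorm (fun x => ⨆ t ∈ Ioo (0:ℝ) T, ‖f (γ x t) - f x‖ / t ^ δ) 2
        (volume.restrict (Icc (-1:ℝ) 1))
      ≤ ENNReal.ofReal c * eLpNorm g 2 volume := step1
    _ ≤ ENNReal.ofReal c *
        (eLpNorm (⇑F') 2 volume + ENNReal.ofReal (2 * r) * eLpNorm (⇑F'') 2 volume) :=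
        mul_le_mul_right step2 _
    _ ≤ ENNReal.ofReal c *
        (ENNReal.ofReal B * E + ENNReal.ofReal (2 * r) *
          (ENNReal.ofReal B * (ENNReal.ofReal B * E))) := by
        refine mul_le_mul_right (add_le_add bern1 (mul_le_mul_right b2' _)) _
    _ = ENNReal.ofReal (c * (B + 2 * r * (B * B))) * E := by
        rw [ENNReal.ofReal_mul hcpos.le,
          ENNReal.ofReal_add hBpos.le (by positivity : (0:ℝ) ≤ 2 * r * (B * B)),
          ENNReal.ofReal_mul (by positivity : (0:ℝ) ≤ 2 * r),
          ENNReal.ofReal_mul (by positivity : (0:ℝ) ≤ B)]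
        ring
    _ = ENNReal.ofReal (10 * (2:ℝ) ^ (δ * (k:ℝ) / α)) * E := by rw [harith]

end Main
end

section
/- Let g ∈ C_0^∞(ℝ) be supported in [−1/2,1/2], g ≥ 0, ∫g = 1, and fix α with 1/4 ≤ α ≤ 1, R large, c > 0 small. For each x ∈ (c/2, c), the equation x − t^α − 2R²t = 0 has a unique solution t_x ∈ (0, cR^{−2}), and with f̂_R(η) = R^{−1}g((η + R²)/R), the phase Φ_R(ξ; x, t_x) = (x − t_x^α − 2R² t_x) R ξ + t_x R² ξ² satisfies |Φ_R(ξ; x, t_x)| ≤ 1/100 for |ξ| ≤ 1/2, hence |U_γ f_R(x, t_x)| ≥ 1/(4π) for γ(x,t) = x − t^α. -/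
open MeasureTheory Real Set

set_option maxHeartbeats 1000000

/-- For `1/4 ≤ α ≤ 1`, `c` small, `R` large: for each `x ∈ (c/2, c)` the equation
`x − t^α − 2R²t = 0` has a unique solution `t_x ∈ (0, cR^{−2})`, and at this solution the
phase `Φ_R(ξ) = (x − t_x^α − 2R²t_x)Rξ + t_x R²ξ²` satisfies `|Φ_R(ξ)| ≤ 1/100` for
`|ξ| ≤ 1/2`, whence `|U_γ f_R(x,t_x)| ≥ 1/(4π)` for `f̂_R(η) = R^{−1}g((η+R²)/R)` and
`γ(x,t) = x − t^α`. -/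
theorem unique_time_and_lower_bound
    (α : ℝ) (hα : 1/4 ≤ α) (hα1 : α ≤ 1)
    (g : ℝ → ℝ)
    (hg : ContDiff ℝ (⊤ : ℕ∞) g) (hgsupp : Function.support g ⊆ Icc (-(1/2)) (1/2))
    (hgpos : ∀ ξ, 0 ≤ g ξ) (hgint : ∫ ξ : ℝ, g ξ = 1) :
    ∃ c₀ > (0:ℝ), ∀ c : ℝ, 0 < c → c ≤ c₀ → ∃ R₀ : ℝ, ∀ R : ℝ, R₀ ≤ R →
      ∀ x ∈ Ioo (c/2) c,
        (∃! t : ℝ, t ∈ Ioo (0:ℝ) (c * R ^ (-(2:ℝ))) ∧ x - t ^ α - 2 * R ^ 2 * t = 0) ∧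
        ∀ t : ℝ, t ∈ Ioo (0:ℝ) (c * R ^ (-(2:ℝ))) → x - t ^ α - 2 * R ^ 2 * t = 0 →
          (∀ ξ : ℝ, |ξ| ≤ 1/2 →
            |(x - t ^ α - 2 * R ^ 2 * t) * R * ξ + t * R ^ 2 * ξ ^ 2| ≤ 1/100) ∧
          1 / (4 * π) ≤ ‖Uminus α (fun η => ((1 / R) * g ((η + R ^ 2) / R) : ℂ)) x t‖ := by
  have hα0 : (0:ℝ) < α := lt_of_lt_of_le (by norm_num) hα
  have hgC : Continuous g := hg.continuous
  have hgcs : HasCompactSupport g :=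
    HasCompactSupport.intro isCompact_Icc (fun y hy => by
      by_contra h; exact hy (hgsupp h))
  have hgInt : Integrable g := hgC.integrable_of_hasCompactSupport hgcs
  refine ⟨1/25, by norm_num, fun c hc hc25 => ⟨1, fun R hR x hx => ?_⟩⟩
  have hR0 : (0:ℝ) < R := lt_of_lt_of_le one_pos hR
  have hRneg2 : R ^ (-(2:ℝ)) = (R ^ 2)⁻¹ := by
    rw [Real.rpow_neg hR0.le, show ((2:ℝ)) = ((2:ℕ):ℝ) from by norm_num, Real.rpow_natCast]
  set b : ℝ := c * R ^ (-(2:ℝ)) with hbdef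
  have hbpos : 0 < b := mul_pos hc (Real.rpow_pos_of_pos hR0 _)
  have hbR2 : b * R ^ 2 = c := by
    rw [hbdef, hRneg2]; field_simp
  have hcont : Continuous fun s : ℝ => s ^ α + 2 * R ^ 2 * s := by
    refine Continuous.add ?_ (by continuity)
    exact continuous_iff_continuousAt.2 fun s => Real.continuousAt_rpow_const s α (Or.inr hα0.le)
  have hmono : StrictMonoOn (fun s : ℝ => s ^ α + 2 * R ^ 2 * s) (Ici 0) := by
    intro s hs u hu hsu
    have h1 : s ^ α < u ^ α := Real.rpow_lt_rpow hs hsu hα0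
    have h2 : 2 * R ^ 2 * s < 2 * R ^ 2 * u := by
      have : (0:ℝ) < 2 * R ^ 2 := by positivity
      exact (mul_lt_mul_iff_right₀ this).2 hsu
    simpa using add_lt_add h1 h2
  have hf0 : (0:ℝ) ^ α + 2 * R ^ 2 * 0 = 0 := by
    rw [Real.zero_rpow hα0.ne']; ring
  have hx0 : 0 < x := lt_trans (by linarith : (0:ℝ) < c/2) hx.1
  have hfb : x < b ^ α + 2 * R ^ 2 * b := by
    have h1 : 0 ≤ b ^ α := Real.rpow_nonneg hbpos.le α
    have h2 : 2 * R ^ 2 * b = 2 * c := by nlinarith [hbR2]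
    nlinarith [hx.2]
  have hmem : x ∈ Ioo ((fun s : ℝ => s ^ α + 2 * R ^ 2 * s) 0)
      ((fun s : ℝ => s ^ α + 2 * R ^ 2 * s) b) := by
    refine ⟨?_, hfb⟩
    show (0:ℝ) ^ α + 2 * R ^ 2 * 0 < x
    rw [hf0]; exact hx0
  obtain ⟨t₀, ht₀mem, ht₀eq⟩ := intermediate_value_Ioo hbpos.le hcont.continuousOn hmem
  have ht₀eq' : t₀ ^ α + 2 * R ^ 2 * t₀ = x := ht₀eq
  constructor
  · refine ⟨t₀, ⟨ht₀mem, by linarith [ht₀eq']⟩, ?_⟩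
    rintro u ⟨humem, hueq⟩
    refine hmono.injOn humem.1.le ht₀mem.1.le ?_
    show u ^ α + 2 * R ^ 2 * u = t₀ ^ α + 2 * R ^ 2 * t₀
    linarith [ht₀eq']
  · intro t htmem hteq
    have ht0 : 0 < t := htmem.1
    have htb : t < b := htmem.2
    have hθc : t * R ^ 2 < c := by
      calc t * R ^ 2 < b * R ^ 2 := by
            exact (mul_lt_mul_iff_left₀ (by positivity)).2 htb
        _ = c := hbR2
    have hθ0 : 0 < t * R ^ 2 := by positivity
    constructor
    · intro ξ hξ
      rw [hteq]
      have hξ2 : ξ ^ 2 ≤ 1/4 := by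
        have := abs_nonneg ξ
        nlinarith [sq_abs ξ]
      have h1 : 0 ≤ t * R ^ 2 * ξ ^ 2 := by positivity
      rw [zero_mul, zero_mul, zero_add, abs_of_nonneg h1]
      nlinarith [hθ0]
    · -- the main estimate
      have hx2 : x - t ^ α = 2 * R ^ 2 * t := by linarith
      have hUeq : Uminus α (fun η => ((1 / R) * g ((η + R ^ 2) / R) : ℂ)) x t
          = (1 / (2 * (π:ℂ))) * ∫ η : ℝ,
              Complex.exp (Complex.I * (((x - t ^ α) * η + t * η ^ 2 : ℝ) : ℂ)) *
                ((1 / (R:ℂ)) * ((g ((η + R ^ 2) / R) : ℝ) : ℂ)) := rfl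
      set F : ℝ → ℂ := fun η =>
        Complex.exp (Complex.I * (((x - t ^ α) * η + t * η ^ 2 : ℝ) : ℂ)) *
          ((1 / (R:ℂ)) * ((g ((η + R ^ 2) / R) : ℝ) : ℂ)) with hFdef
      set J : ℂ := ∫ ξ : ℝ, Complex.exp (Complex.I * ((t * R ^ 2 * ξ ^ 2 : ℝ) : ℂ)) * ((g ξ : ℝ) : ℂ)
        with hJdef
      have key : ∀ ξ : ℝ, F (R * ξ - R ^ 2)
          = (Complex.exp (Complex.I * ((-(t * R ^ 4) : ℝ) : ℂ)) * (1 / (R:ℂ))) *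
            (Complex.exp (Complex.I * ((t * R ^ 2 * ξ ^ 2 : ℝ) : ℂ)) * ((g ξ : ℝ) : ℂ)) := by
        intro ξ
        have harg : (R * ξ - R ^ 2 + R ^ 2) / R = ξ := by field_simp; ring
        have hphase : ((x - t ^ α) * (R * ξ - R ^ 2) + t * (R * ξ - R ^ 2) ^ 2 : ℝ)
            = -(t * R ^ 4) + t * R ^ 2 * ξ ^ 2 := by rw [hx2]; ring
        rw [hFdef]
        simp only
        rw [harg, hphase]
        push_cast
        rw [mul_add Complex.I, Complex.exp_add]
        ring
      have hsub : ∫ η : ℝ, F η = R • ∫ ξ : ℝ, F (R * ξ - R ^ 2) := by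
        have h1 : ∫ ξ : ℝ, F (R * ξ - R ^ 2) = |R⁻¹| • ∫ y : ℝ, F (y - R ^ 2) :=
          MeasureTheory.Measure.integral_comp_mul_left (fun y => F (y - R ^ 2)) R
        have h2 : ∫ y : ℝ, F (y - R ^ 2) = ∫ η : ℝ, F η :=
          integral_sub_right_eq_self F (R ^ 2)
        rw [h1, h2, abs_of_pos (inv_pos.2 hR0), smul_smul, mul_inv_cancel₀ hR0.ne', one_smul]
      have hJcomp : ∫ ξ : ℝ, F (R * ξ - R ^ 2)
          = (Complex.exp (Complex.I * ((-(t * R ^ 4) : ℝ) : ℂ)) * (1 / (R:ℂ))) * J := by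
        rw [hJdef, ← MeasureTheory.integral_const_mul]
        exact integral_congr_ae (Filter.Eventually.of_forall key)
      have hE : ‖Complex.exp (Complex.I * ((-(t * R ^ 4) : ℝ) : ℂ))‖ = 1 := by
        rw [mul_comm Complex.I, Complex.norm_exp_ofReal_mul_I]
      have hnormF : ‖∫ η : ℝ, F η‖ = ‖J‖ := by
        rw [hsub, hJcomp, norm_smul, norm_mul, norm_mul, hE]
        simp only [norm_div, norm_one, Complex.norm_real, Real.norm_eq_abs,
          abs_of_pos hR0, one_mul]
        field_simp
      -- lower bound for ‖J‖
      have hcont2 : Continuous fun ξ : ℝ =>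
          Complex.exp (Complex.I * ((t * R ^ 2 * ξ ^ 2 : ℝ) : ℂ)) * ((g ξ : ℝ) : ℂ) := by
        refine Continuous.mul ?_ (Complex.continuous_ofReal.comp hgC)
        exact Complex.continuous_exp.comp
          (continuous_const.mul (Complex.continuous_ofReal.comp
            (continuous_const.mul (continuous_pow 2))))
      have hcs2 : HasCompactSupport fun ξ : ℝ =>
          Complex.exp (Complex.I * ((t * R ^ 2 * ξ ^ 2 : ℝ) : ℂ)) * ((g ξ : ℝ) : ℂ) := by
        refine HasCompactSupport.intro hgcs ?_
        intro ξ hξ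
        have : g ξ = 0 := image_eq_zero_of_notMem_tsupport hξ
        simp [this]
      have hint2 : Integrable fun ξ : ℝ =>
          Complex.exp (Complex.I * ((t * R ^ 2 * ξ ^ 2 : ℝ) : ℂ)) * ((g ξ : ℝ) : ℂ) :=
        hcont2.integrable_of_hasCompactSupport hcs2
      have hcosC : Continuous fun ξ : ℝ => Real.cos (t * R ^ 2 * ξ ^ 2) * g ξ := by
        exact (Real.continuous_cos.comp (continuous_const.mul (continuous_pow 2))).mul hgC
      have hcoscs : HasCompactSupport fun ξ : ℝ => Real.cos (t * R ^ 2 * ξ ^ 2) * g ξ := by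
        refine HasCompactSupport.intro hgcs ?_
        intro ξ hξ
        have : g ξ = 0 := image_eq_zero_of_notMem_tsupport hξ
        simp [this]
      have hcosInt : Integrable fun ξ : ℝ => Real.cos (t * R ^ 2 * ξ ^ 2) * g ξ :=
        hcosC.integrable_of_hasCompactSupport hcoscs
      have hre : J.re = ∫ ξ : ℝ, Real.cos (t * R ^ 2 * ξ ^ 2) * g ξ := by
        have h := integral_re hint2
        simp only [RCLike.re_to_complex] at h
        rw [hJdef, ← h]
        refine integral_congr_ae (Filter.Eventually.of_forall fun ξ => ?_)
        show (Complex.exp (Complex.I * ((t * R ^ 2 * ξ ^ 2 : ℝ) : ℂ)) * ((g ξ : ℝ) : ℂ)).re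
            = Real.cos (t * R ^ 2 * ξ ^ 2) * g ξ
        rw [mul_comm Complex.I, Complex.mul_re, Complex.exp_ofReal_mul_I_re]
        simp
      have hpt : ∀ ξ : ℝ, (1/2) * g ξ ≤ Real.cos (t * R ^ 2 * ξ ^ 2) * g ξ := by
        intro ξ
        rcases eq_or_ne (g ξ) 0 with h | h
        · simp [h]
        · have hξmem : ξ ∈ Icc (-(1/2 : ℝ)) (1/2) := hgsupp (Function.mem_support.2 h)
          have hξ2 : ξ ^ 2 ≤ 1/4 := by
            obtain ⟨h1, h2⟩ := hξmem; nlinarith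
          have hq : t * R ^ 2 * ξ ^ 2 ≤ c / 4 := by
            have := mul_le_mul_of_nonneg_left hξ2 hθ0.le
            nlinarith
          have h1 : t * R ^ 2 * ξ ^ 2 ≤ π / 3 := by
            linarith [Real.pi_gt_three]
          have h2 : Real.cos (π / 3) ≤ Real.cos (t * R ^ 2 * ξ ^ 2) :=
            Real.cos_le_cos_of_nonneg_of_le_pi (by positivity) (by linarith [Real.pi_pos]) h1
          rw [Real.cos_pi_div_three] at h2
          have := hgpos ξ
          nlinarith
      have hhalf : (1:ℝ)/2 ≤ J.re := by
        rw [hre]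
        calc (1:ℝ)/2 = ∫ ξ : ℝ, (1/2) * g ξ := by
              rw [MeasureTheory.integral_const_mul, hgint]; norm_num
          _ ≤ ∫ ξ : ℝ, Real.cos (t * R ^ 2 * ξ ^ 2) * g ξ :=
              integral_mono (hgInt.const_mul _) hcosInt hpt
      have hJnorm : (1:ℝ)/2 ≤ ‖J‖ :=
        le_trans hhalf (Complex.re_le_norm J)
      rw [hUeq, norm_mul, hnormF]
      have hπ := Real.pi_pos
      have hc1 : ‖(1 : ℂ) / (2 * (π:ℂ))‖ = 1 / (2 * π) := by
        rw [norm_div, norm_one, norm_mul, Complex.norm_real, Real.norm_eq_abs, abs_of_pos hπ]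
        norm_num
      rw [hc1]
      rw [div_mul_eq_mul_div, one_mul, div_le_div_iff₀ (by positivity) (by positivity)]
      nlinarith [hJnorm, hπ]
end
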